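/- Let A and B be positive definite d×d complex matrices. Consider the real-linear map T defined on pairs (X₁, X₂) of anti-Hermitian d×d matrices by T(X₁, X₂) = [A^{-1/2}, X₁]BA^{-1/2} + A^{-1/2}B[A^{-1/2}, X₁] + A^{-1/2}[B, X₂]A^{-1/2}, where [X, Y] = XY − YX. Then T is surjective onto the real subspace { Y Hermitian : tr(A^{1/2}B^{-1}A^{1/2} Y) = 0 } if and only if the joint commutant {A, B}' = { C ∈ M_d(ℂ) : AC = CA and BC = CB } consists only of scalar multiples of the identity. -/

import Mathlib

open Matrix
open scoped ComplexOrder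

noncomputable def Matrix.PosSemidef.sqrt {n : Type*} [Fintype n] [DecidableEq n] {𝕜 : Type*}
    [RCLike 𝕜] {A : Matrix n n 𝕜} (hA : A.PosSemidef) : Matrix n n 𝕜 :=
  hA.1.eigenvectorUnitary.1 * diagonal ((↑) ∘ Real.sqrt ∘ hA.1.eigenvalues) *
  (star hA.1.eigenvectorUnitary : Matrix n n 𝕜)

/-!
Write `R = A^{1/2}`, `S = R⁻¹`, `W = R B⁻¹ R`. The formula for `T` is the restriction to
anti-Hermitian pairs of the `ℂ`-linear map `T_ℂ = differentialMap S B` on all pairs, with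
`T_ℂ(X*) = -T_ℂ(X)*`, and the tangent space is the Hermitian part of the `*`-closed hyperplane
`W^⊥ = {Y : tr(W Y) = 0}`.
Splitting into Hermitian and anti-Hermitian parts, `T` is onto the tangent space iff
`W^⊥ ≤ range T_ℂ`. Since `(Z, Y) ↦ tr(Z Y)` is nondegenerate, this is `(range T_ℂ)^⊥ ≤ ℂ W`.
By the adjoint formula `tr(T_ℂ(X₁, X₂) Z) = tr(X₁ [N, S]) + tr(X₂ [S Z S, B])`,
`N = B S Z + Z S B`, the annihilator of the range consists of the `Z = R B⁻¹ C R` with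
`C` in the joint commutant of `A` and `B`, and `W` corresponds to `C = 1`.
-/

theorem commute_mul_add_mul_iff {α : Type*} [NonUnitalRing α] {a b : α} :
    Commute (a * b + b * a) b ↔ Commute (b * b) a := by
  simp only [Commute, SemiconjBy, add_mul, mul_add, mul_assoc]
  rw [add_comm, add_right_inj, eq_comm]

namespace LinearMap.BilinForm

theorem mem_orthogonal_span_singleton_iff {R M : Type*} [CommSemiring R] [AddCommMonoid M]
    [Module R M] {B : LinearMap.BilinForm R M} {x y : M} :
    y ∈ B.orthogonal (R ∙ x) ↔ B x y = 0 := by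
  refine ⟨fun h => h x (Submodule.mem_span_singleton_self x), fun h z hz => ?_⟩
  obtain ⟨c, rfl⟩ := Submodule.mem_span_singleton.mp hz
  simp [h]

theorem orthogonal_le_orthogonal_iff {K V : Type*} [Field K] [AddCommGroup V] [Module K V]
    [FiniteDimensional K V] {B : LinearMap.BilinForm K V} (hB : B.Nondegenerate)
    (hB₀ : B.IsRefl) {U W : Submodule K V} : B.orthogonal U ≤ B.orthogonal W ↔ W ≤ U := by
  refine ⟨fun h => ?_, orthogonal_le⟩
  rw [← orthogonal_orthogonal hB hB₀ U, ← orthogonal_orthogonal hB hB₀ W]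
  exact orthogonal_le h

end LinearMap.BilinForm

theorem LinearMap.le_range_iff_forall_isSelfAdjoint {E F : Type*} [AddCommGroup E]
    [Module ℂ E] [StarAddMonoid E] [StarModule ℂ E] [AddCommGroup F] [Module ℂ F]
    [StarAddMonoid F] [StarModule ℂ F] {T : E →ₗ[ℂ] F} (hT : ∀ x, T (star x) = -star (T x))
    {V : Submodule ℂ F} (hV : ∀ y ∈ V, star y ∈ V) :
    V ≤ LinearMap.range T ↔ ∀ y, IsSelfAdjoint y → y ∈ V → ∃ x, star x = -x ∧ T x = y := by
  constructor
  · intro h y hy hyV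
    obtain ⟨x, rfl⟩ := h hyV
    refine ⟨(2⁻¹ : ℂ) • (x - star x), ?_, ?_⟩
    · rw [star_smul, star_sub, star_star, ← smul_neg, neg_sub]
      simp
    · rw [map_smul, map_sub, hT, hy.star_eq, sub_neg_eq_add, ← two_smul ℂ, smul_smul]
      norm_num
  · intro h y hy
    have hre : (realPart y : F) ∈ V := by
      rw [realPart_apply_coe]
      exact V.smul_of_tower_mem _ (V.add_mem hy (hV y hy))
    have him : (imaginaryPart y : F) ∈ V := by
      rw [imaginaryPart_apply_coe]
      exact V.smul_mem _ (V.smul_of_tower_mem _ (V.sub_mem hy (hV y hy)))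
    obtain ⟨x₁, -, hx₁⟩ := h _ (realPart y).2 hre
    obtain ⟨x₂, -, hx₂⟩ := h _ (imaginaryPart y).2 him
    refine ⟨x₁ + Complex.I • x₂, ?_⟩
    rw [map_add, map_smul, hx₁, hx₂, realPart_add_I_smul_imaginaryPart]

namespace Matrix

section Sqrt

open scoped MatrixOrder

variable {n 𝕜 : Type*} [Fintype n] [DecidableEq n] [RCLike 𝕜] {A : Matrix n n 𝕜}

theorem PosSemidef.sqrt_eq_cfcSqrt (hA : A.PosSemidef) : hA.sqrt = CFC.sqrt A := by
  rw [CFC.sqrt_eq_real_sqrt A hA.nonneg, cfcₙ_eq_cfc, hA.1.cfc_eq]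
  rfl

theorem PosSemidef.sqrt_mul_self (hA : A.PosSemidef) : hA.sqrt * hA.sqrt = A := by
  rw [hA.sqrt_eq_cfcSqrt, CFC.sqrt_mul_sqrt_self A hA.nonneg]

theorem PosSemidef.isHermitian_sqrt (hA : A.PosSemidef) : hA.sqrt.IsHermitian := by
  rw [hA.sqrt_eq_cfcSqrt]
  exact (CFC.sqrt_nonneg A).isSelfAdjoint

end Sqrt

section TraceForm

variable {n K : Type*} [Fintype n] [CommRing K]

def traceBilinForm : LinearMap.BilinForm K (Matrix n n K) :=
  (LinearMap.mul K (Matrix n n K)).compr₂ (traceLinearMap n K K)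

@[simp]
theorem traceBilinForm_apply (Z Y : Matrix n n K) : traceBilinForm Z Y = trace (Z * Y) := rfl

theorem traceBilinForm_isRefl : (traceBilinForm : LinearMap.BilinForm K (Matrix n n K)).IsRefl :=
  fun Z Y h => by rwa [traceBilinForm_apply, trace_mul_comm]

theorem traceBilinForm_nondegenerate :
    (traceBilinForm : LinearMap.BilinForm K (Matrix n n K)).Nondegenerate := by
  refine ⟨fun Z hZ => ?_, fun Y hY => ?_⟩
  · exact ext_iff_trace_mul_right.mpr fun Y => by simpa using hZ Y
  · exact ext_iff_trace_mul_left.mpr fun Z => by simpa using hY Z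

theorem conjTranspose_mem_orthogonal_span_singleton [StarRing K] {W Y : Matrix n n K}
    (hW : W.IsHermitian) (hY : Y ∈ traceBilinForm.orthogonal (K ∙ W)) :
    Yᴴ ∈ traceBilinForm.orthogonal (K ∙ W) := by
  rw [LinearMap.BilinForm.mem_orthogonal_span_singleton_iff, traceBilinForm_apply] at hY ⊢
  rw [← hW.eq, ← conjTranspose_mul, trace_conjTranspose, trace_mul_comm, hY, star_zero]

theorem trace_commutator_mul (S X N : Matrix n n K) :
    trace ((S * X - X * S) * N) = trace (X * (N * S - S * N)) := by
  rw [sub_mul, mul_sub, trace_sub, trace_sub, Matrix.mul_assoc, trace_mul_comm S]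
  simp only [Matrix.mul_assoc]

end TraceForm

section DifferentialMap

variable {n K : Type*} [Fintype n] [DecidableEq n] [CommRing K]

def differentialMap (S B : Matrix n n K) : Matrix n n K × Matrix n n K →ₗ[K] Matrix n n K where
  toFun X :=
    (S * X.1 - X.1 * S) * B * S + S * B * (S * X.1 - X.1 * S) + S * (B * X.2 - X.2 * B) * S
  map_add' X Y := by simp only [Prod.fst_add, Prod.snd_add]; noncomm_ring
  map_smul' c X := by
    simp only [Prod.smul_fst, Prod.smul_snd, Matrix.mul_smul, Matrix.smul_mul, RingHom.id_apply,
      ← smul_sub, ← smul_add]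

theorem differentialMap_apply (S B : Matrix n n K) (X : Matrix n n K × Matrix n n K) :
    differentialMap S B X =
      (S * X.1 - X.1 * S) * B * S + S * B * (S * X.1 - X.1 * S) + S * (B * X.2 - X.2 * B) * S :=
  rfl

theorem differentialMap_star [StarRing K] {S B : Matrix n n K} (hS : S.IsHermitian)
    (hB : B.IsHermitian) (X : Matrix n n K × Matrix n n K) :
    differentialMap S B (star X) = -star (differentialMap S B X) := by
  simp only [differentialMap_apply, Prod.fst_star, Prod.snd_star, star_eq_conjTranspose,
    conjTranspose_add, conjTranspose_mul, conjTranspose_sub, hS.eq, hB.eq]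
  noncomm_ring

theorem trace_differentialMap_mul (S B Z : Matrix n n K) (X : Matrix n n K × Matrix n n K) :
    trace (differentialMap S B X * Z) =
      trace (X.1 * ((B * S * Z + Z * S * B) * S - S * (B * S * Z + Z * S * B))) +
        trace (X.2 * (S * Z * S * B - B * (S * Z * S))) := by
  rw [← trace_commutator_mul, ← trace_commutator_mul, differentialMap_apply]
  set C := S * X.1 - X.1 * S
  set D := B * X.2 - X.2 * B
  have hC : trace (S * B * C * Z) = trace (C * (Z * S * B)) := by
    rw [Matrix.mul_assoc, trace_mul_comm]
    simp only [Matrix.mul_assoc]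
  have hD : trace (S * D * S * Z) = trace (D * (S * Z * S)) := by
    rw [Matrix.mul_assoc, Matrix.mul_assoc, trace_mul_comm]
    simp only [Matrix.mul_assoc]
  rw [add_mul, add_mul, trace_add, trace_add, hC, hD, mul_add, trace_add]
  simp only [Matrix.mul_assoc]

theorem mem_orthogonal_range_differentialMap_iff (S B Z : Matrix n n K) :
    Z ∈ traceBilinForm.orthogonal (LinearMap.range (differentialMap S B)) ↔
      Commute (B * S * Z + Z * S * B) S ∧ Commute (S * Z * S) B := by
  have hmem : Z ∈ traceBilinForm.orthogonal (LinearMap.range (differentialMap S B)) ↔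
      ∀ X, trace (differentialMap S B X * Z) = 0 :=
    ⟨fun h X => h _ ⟨X, rfl⟩, by rintro h _ ⟨X, rfl⟩; exact h X⟩
  simp only [hmem, trace_differentialMap_mul, Prod.forall]
  rw [Commute, SemiconjBy, Commute, SemiconjBy, ← sub_eq_zero, ← sub_eq_zero (a := _ * B)]
  constructor
  · intro h
    refine ⟨ext_iff_trace_mul_left.mpr fun X => ?_, ext_iff_trace_mul_left.mpr fun X => ?_⟩
    · simpa using h X 0
    · simpa using h 0 X
  · rintro ⟨h₁, h₂⟩ X₁ X₂
    simp [h₁, h₂]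

theorem mul_mul_mem_orthogonal_range_differentialMap_iff {R : Matrix n n K} (hR : IsUnit R)
    (B M : Matrix n n K) :
    R * M * R ∈ traceBilinForm.orthogonal (LinearMap.range (differentialMap R⁻¹ B)) ↔
      Commute (R * R) (B * M) ∧ Commute M B := by
  lift R to (Matrix n n K)ˣ using hR
  rw [mem_orthogonal_range_differentialMap_iff, ← coe_units_inv, Commute.units_inv_right_iff]
  have hM : (↑R⁻¹ : Matrix n n K) * (R * M * R) * (↑R⁻¹ : Matrix n n K) = M := by
    simp [Matrix.mul_assoc]
  rw [hM]
  refine and_congr_left fun hMB => ?_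
  have hN : B * (↑R⁻¹ : Matrix n n K) * (R * M * R) + R * M * R * (↑R⁻¹ : Matrix n n K) * B =
      B * M * R + R * (B * M) := by
    simp only [Matrix.mul_assoc, Units.inv_mul_cancel_left, Units.mul_inv_cancel_left, hMB.eq]
  rw [hN, commute_mul_add_mul_iff]

theorem orthogonal_range_differentialMap_le_span_iff {R B : Matrix n n K} (hR : IsUnit R)
    (hB : IsUnit B) :
    traceBilinForm.orthogonal (LinearMap.range (differentialMap R⁻¹ B)) ≤ K ∙ (R * B⁻¹ * R) ↔
      ∀ C, Commute (R * R) C → Commute B C → ∃ c : K, C = c • 1 := by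
  have hR' := (isUnit_iff_isUnit_det R).mp hR
  have hB' := (isUnit_iff_isUnit_det B).mp hB
  constructor
  · intro h C hAC hBC
    have hBiB : Commute B⁻¹ B := (nonsing_inv_mul B hB').trans (mul_nonsing_inv B hB').symm
    have hmem := (mul_mul_mem_orthogonal_range_differentialMap_iff hR B (B⁻¹ * C)).mpr
      ⟨by rwa [mul_nonsing_inv_cancel_left _ _ hB'], hBiB.mul_left hBC.symm⟩
    obtain ⟨c, hc⟩ := Submodule.mem_span_singleton.mp (h hmem)
    refine ⟨c, ?_⟩
    calc C = B * (R⁻¹ * (R * (B⁻¹ * C) * R) * R⁻¹) := by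
          simp only [Matrix.mul_assoc, nonsing_inv_mul_cancel_left _ _ hR',
            mul_nonsing_inv_cancel_left _ _ hB', mul_nonsing_inv _ hR', Matrix.mul_one]
      _ = c • 1 := by
          rw [← hc]
          simp only [Matrix.mul_assoc, Matrix.mul_smul, Matrix.smul_mul,
            nonsing_inv_mul_cancel_left _ _ hR', mul_nonsing_inv _ hR', mul_nonsing_inv _ hB',
            Matrix.mul_one]
  · intro h Z hZorth
    have hZ : Z = R * (R⁻¹ * Z * R⁻¹) * R := by
      simp only [Matrix.mul_assoc, mul_nonsing_inv_cancel_left _ _ hR', nonsing_inv_mul _ hR',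
        Matrix.mul_one]
    rw [hZ] at hZorth ⊢
    obtain ⟨hAC, hMB⟩ := (mul_mul_mem_orthogonal_range_differentialMap_iff hR _ _).mp hZorth
    obtain ⟨c, hc⟩ := h _ hAC ((Commute.refl _).mul_right hMB.symm)
    have hM : R⁻¹ * Z * R⁻¹ = c • B⁻¹ := by
      rw [← nonsing_inv_mul_cancel_left (A := B) (R⁻¹ * Z * R⁻¹) hB', hc, Matrix.mul_smul,
        Matrix.mul_one]
    refine Submodule.mem_span_singleton.mpr ⟨c, ?_⟩
    rw [hM, Matrix.mul_smul, Matrix.smul_mul]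

end DifferentialMap

end Matrix

open LinearMap.BilinForm

/-- The differential of the map `Γ` is surjective onto the tangent space
`{Y Hermitian : tr(A^{1/2} B⁻¹ A^{1/2} Y) = 0}` iff the joint commutant of `A` and `B`
is trivial.  Here `T (X₁, X₂) = [A^{-1/2}, X₁] B A^{-1/2} + A^{-1/2} B [A^{-1/2}, X₁]
+ A^{-1/2} [B, X₂] A^{-1/2}` on pairs of anti-Hermitian matrices. -/
theorem differential_surjective_iff_trivial_commutant
    (d : ℕ) (A B : Matrix (Fin d) (Fin d) ℂ) (hA : A.PosDef) (hB : B.PosDef) :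
    (∀ Y : Matrix (Fin d) (Fin d) ℂ, Y.IsHermitian →
        (hA.posSemidef.sqrt * B⁻¹ * hA.posSemidef.sqrt * Y).trace = 0 →
        ∃ X₁ X₂ : Matrix (Fin d) (Fin d) ℂ, X₁ᴴ = -X₁ ∧ X₂ᴴ = -X₂ ∧
          (hA.posSemidef.sqrt⁻¹ * X₁ - X₁ * hA.posSemidef.sqrt⁻¹) * B * hA.posSemidef.sqrt⁻¹
            + hA.posSemidef.sqrt⁻¹ * B *
                (hA.posSemidef.sqrt⁻¹ * X₁ - X₁ * hA.posSemidef.sqrt⁻¹)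
            + hA.posSemidef.sqrt⁻¹ * (B * X₂ - X₂ * B) * hA.posSemidef.sqrt⁻¹ = Y) ↔
    (∀ C : Matrix (Fin d) (Fin d) ℂ, A * C = C * A → B * C = C * B →
        ∃ c : ℂ, C = c • (1 : Matrix (Fin d) (Fin d) ℂ)) := by
  set R := hA.posSemidef.sqrt
  have hRR : R * R = A := hA.posSemidef.sqrt_mul_self
  have hR : IsUnit R := isUnit_of_mul_isUnit_left (hRR ▸ hA.isUnit)
  have hRH : R.IsHermitian := hA.posSemidef.isHermitian_sqrt
  have hW : (R * B⁻¹ * R).IsHermitian := by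
    simpa [hRH.eq] using isHermitian_mul_mul_conjTranspose R hB.isHermitian.inv
  calc _ ↔ ∀ Y, IsSelfAdjoint Y → Y ∈ traceBilinForm.orthogonal (ℂ ∙ (R * B⁻¹ * R)) →
        ∃ X, star X = -X ∧ differentialMap R⁻¹ B X = Y := by
          simp only [← isHermitian_iff_isSelfAdjoint, mem_orthogonal_span_singleton_iff,
            traceBilinForm_apply, differentialMap_apply, Prod.exists, Prod.ext_iff, Prod.fst_star,
            Prod.snd_star, Prod.fst_neg, Prod.snd_neg, star_eq_conjTranspose, and_assoc]
    _ ↔ traceBilinForm.orthogonal (ℂ ∙ (R * B⁻¹ * R)) ≤ LinearMap.range (differentialMap R⁻¹ B) :=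
          (LinearMap.le_range_iff_forall_isSelfAdjoint
            (differentialMap_star hRH.inv hB.isHermitian)
            fun _ => conjTranspose_mem_orthogonal_span_singleton hW).symm
    _ ↔ traceBilinForm.orthogonal (LinearMap.range (differentialMap R⁻¹ B)) ≤
          ℂ ∙ (R * B⁻¹ * R) := by
          rw [← orthogonal_le_orthogonal_iff traceBilinForm_nondegenerate traceBilinForm_isRefl,
            orthogonal_orthogonal traceBilinForm_nondegenerate traceBilinForm_isRefl]
    _ ↔ _ := by
          rw [orthogonal_range_differentialMap_le_span_iff hR hB.isUnit, hRR]
          rfl
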